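/- arXiv:2101.09155 — 2 statements merged into one kernel-verified Lean document; each statement's English description precedes it below -/
import Mathlib

section
/- Let φ : ℝ → ℝ be three times continuously differentiable on an open interval containing [m,M] with φ''' ≥ 0 there (φ is 3-convex). Suppose φ∘f ∈ L and the functions t ↦ (f(t) − m)·φ'(f(t)) and t ↦ (M − f(t))·φ'(f(t)) belong to L. Then, writing Δ = (φ(M) − φ(m))/(M − m), one has (A(f) − m)·[Δ − φ'(m)/2] − (1/2)·A((f − m·1)·(φ'∘f)) ≤ (M − A(f))/(M − m)·φ(m) + (A(f) − m)/(M − m)·φ(M) − A(φ∘f) ≤ (1/2)·A((M·1 − f)·(φ'∘f)) − (M − A(f))·[Δ − φ'(M)/2]. -/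
/-!
Since `φ'` is convex, the trapezoid rule overestimates the integral of `φ'`:
`φ v - φ u ≤ (v - u) * (φ' u + φ' v) / 2` for `u ≤ v`. Applied to the pairs `(m, f t)` and
`(f t, M)`, it bounds the gap between the secant of `φ` through `m`, `M` and `φ` itself at
`f t` from below and from above, pointwise in `t`; positivity and linearity of `A` carry both
bounds over to the functional.
-/

open Set

theorem sub_le_trapezoid_of_convexOn_deriv {f f' : ℝ → ℝ} {u v : ℝ} (huv : u ≤ v)
    (hf : ∀ x ∈ Icc u v, HasDerivAt f (f' x) x) (hf' : ConvexOn ℝ (Icc u v) f') :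
    f v - f u ≤ (v - u) * (f' u + f' v) / 2 := by
  rcases huv.eq_or_lt with rfl | huv
  · simp
  have hvu : 0 < v - u := sub_pos.2 huv
  -- `(v - u) * f` minus an antiderivative of the chord of `f'` through `u` and `v`
  let g x := (v - u) * f x - ((v - u) * f' u * (x - u) + (f' v - f' u) * (x - u) ^ 2 / 2)
  have hg : ∀ x ∈ Icc u v,
      HasDerivAt g ((v - u) * f' x - ((v - x) * f' u + (x - u) * f' v)) x := by
    intro x hx
    have hxu := (hasDerivAt_id' x).sub_const u
    refine (((hf x hx).const_mul (v - u)).sub ((hxu.const_mul ((v - u) * f' u)).add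
      ((hxu.pow 2).const_mul (f' v - f' u) |>.div_const 2))).congr_deriv ?_
    push_cast; ring
  have hanti : AntitoneOn g (Icc u v) := by
    refine antitoneOn_of_hasDerivWithinAt_nonpos (convex_Icc u v)
      (fun x hx => (hg x hx).continuousAt.continuousWithinAt)
      (fun x hx => (hg x (interior_subset hx)).hasDerivWithinAt) fun x hx => ?_
    rw [interior_Icc] at hx
    linarith [hf'.secant_mono_aux1 (left_mem_Icc.2 huv.le) (right_mem_Icc.2 huv.le) hx.1 hx.2]
  have := hanti (left_mem_Icc.2 huv.le) (right_mem_Icc.2 huv.le) huv.le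
  simp only [g] at this
  nlinarith

theorem convexOn_deriv_of_iteratedDeriv_three_nonneg {φ : ℝ → ℝ} {D : Set ℝ} (hD : Convex ℝ D)
    (hD' : IsOpen D) (hφ : ContDiffOn ℝ 3 φ D) (hφ3 : ∀ x ∈ D, 0 ≤ iteratedDeriv 3 φ x) :
    ConvexOn ℝ D (deriv φ) := by
  have h2 : ContDiffOn ℝ 2 (deriv φ) D := hφ.deriv_of_isOpen hD' (by norm_num)
  have h1 : ContDiffOn ℝ 1 (deriv (deriv φ)) D := h2.deriv_of_isOpen hD' (by norm_num)
  refine convexOn_of_deriv2_nonneg' hD (h2.differentiableOn (by norm_num))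
    (h1.differentiableOn (by norm_num)) fun x hx => ?_
  simpa [iteratedDeriv_eq_iterate] using hφ3 x hx

theorem sub_le_trapezoid_of_iteratedDeriv_three_nonneg {φ : ℝ → ℝ} {a b u v : ℝ}
    (hφ : ContDiffOn ℝ 3 φ (Ioo a b)) (hφ3 : ∀ x ∈ Ioo a b, 0 ≤ iteratedDeriv 3 φ x)
    (hau : a < u) (huv : u ≤ v) (hvb : v < b) :
    φ v - φ u ≤ (v - u) * (deriv φ u + deriv φ v) / 2 := by
  have hsub : Icc u v ⊆ Ioo a b := Icc_subset_Ioo hau hvb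
  refine sub_le_trapezoid_of_convexOn_deriv huv (fun x hx => ?_)
    ((convexOn_deriv_of_iteratedDeriv_three_nonneg (convex_Ioo a b) isOpen_Ioo hφ hφ3).subset
      hsub (convex_Icc u v))
  exact ((hφ.differentiableOn (by norm_num) x (hsub hx)).differentiableAt
    (isOpen_Ioo.mem_nhds (hsub hx))).hasDerivAt

theorem map_le_map_of_forall_le {E : Type*} {L : Submodule ℝ (E → ℝ)} (A : L →ₗ[ℝ] ℝ)
    (hA : ∀ g : L, (∀ t, 0 ≤ g.1 t) → 0 ≤ A g) {g h : L} (hgh : ∀ t, g.1 t ≤ h.1 t) :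
    A g ≤ A h := by
  simpa using hA (h - g) fun t => sub_nonneg.2 (hgh t)

theorem elr_three_convex_tm2_general {E : Type*} (L : Submodule ℝ (E → ℝ))
    (h1L : (fun _ : E => (1 : ℝ)) ∈ L)
    (A : L →ₗ[ℝ] ℝ)
    (hApos : ∀ g : L, (∀ t : E, 0 ≤ g.1 t) → 0 ≤ A g)
    (hAnorm : A ⟨fun _ => 1, h1L⟩ = 1)
    (m M : ℝ) (hmM : m < M)
    (f : E → ℝ) (hfL : f ∈ L) (hfm : ∀ t, m ≤ f t) (hfM : ∀ t, f t ≤ M)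
    (φ : ℝ → ℝ) (a b : ℝ) (ham : a < m) (hMb : M < b)
    (hφ : ContDiffOn ℝ 3 φ (Set.Ioo a b))
    (hφ3 : ∀ x ∈ Set.Ioo a b, 0 ≤ iteratedDeriv 3 φ x)
    (hφfL : (fun t => φ (f t)) ∈ L)
    (hg1L : (fun t => (f t - m) * deriv φ (f t)) ∈ L)
    (hg2L : (fun t => (M - f t) * deriv φ (f t)) ∈ L) :
    let Δ := (φ M - φ m) / (M - m)
    (A ⟨f, hfL⟩ - m) * (Δ - deriv φ m / 2)
          - (1 / 2) * A ⟨fun t => (f t - m) * deriv φ (f t), hg1L⟩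
        ≤ (M - A ⟨f, hfL⟩) / (M - m) * φ m + (A ⟨f, hfL⟩ - m) / (M - m) * φ M
            - A ⟨fun t => φ (f t), hφfL⟩
      ∧ (M - A ⟨f, hfL⟩) / (M - m) * φ m + (A ⟨f, hfL⟩ - m) / (M - m) * φ M
            - A ⟨fun t => φ (f t), hφfL⟩
        ≤ (1 / 2) * A ⟨fun t => (M - f t) * deriv φ (f t), hg2L⟩
            - (M - A ⟨f, hfL⟩) * (Δ - deriv φ M / 2) := by
  intro Δ
  have hΔ : φ m + Δ * (M - m) = φ M := by
    simp only [Δ]; field_simp [(sub_pos.2 hmM).ne']; ring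
  have trapezoid {u v : ℝ} (hmu : m ≤ u) (huv : u ≤ v) (hvM : v ≤ M) :=
    sub_le_trapezoid_of_iteratedDeriv_three_nonneg hφ hφ3 (ham.trans_le hmu) huv (hvM.trans_lt hMb)
  set one : L := ⟨fun _ => 1, h1L⟩
  set F : L := ⟨f, hfL⟩
  set secantGap : L := φ m • one + Δ • (F - m • one) - ⟨fun t => φ (f t), hφfL⟩
  have hAgap : A secantGap = (M - A F) / (M - m) * φ m + (A F - m) / (M - m) * φ M
      - A ⟨fun t => φ (f t), hφfL⟩ := by
    simp only [secantGap, map_sub, map_add, map_smul, smul_eq_mul, hAnorm]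
    rw [← hΔ]; field_simp [(sub_pos.2 hmM).ne']; ring
  rw [← hAgap]
  constructor
  · calc _ = A ((Δ - deriv φ m / 2) • (F - m • one)
          - (1 / 2 : ℝ) • ⟨fun t => (f t - m) * deriv φ (f t), hg1L⟩) := by
          simp only [map_sub, map_smul, smul_eq_mul, hAnorm]; ring
      _ ≤ A secantGap := map_le_map_of_forall_le A hApos fun t => by
          simp only [secantGap, one, F, Submodule.coe_sub, Submodule.coe_add, Submodule.coe_smul,
            Pi.sub_apply, Pi.add_apply, Pi.smul_apply, smul_eq_mul, mul_one]
          linarith [trapezoid le_rfl (hfm t) (hfM t)]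
  · calc A secantGap ≤ A ((1 / 2 : ℝ) • ⟨fun t => (M - f t) * deriv φ (f t), hg2L⟩
          - (Δ - deriv φ M / 2) • (M • one - F)) := map_le_map_of_forall_le A hApos fun t => by
          simp only [secantGap, one, F, Submodule.coe_sub, Submodule.coe_add, Submodule.coe_smul,
            Pi.sub_apply, Pi.add_apply, Pi.smul_apply, smul_eq_mul, mul_one]
          linarith [trapezoid (hfm t) (hfM t) le_rfl]
      _ = _ := by simp only [map_sub, map_smul, smul_eq_mul, hAnorm]; ring

/-- Edmundson–Lah–Ribarič type inequality for 3-convex functions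
(Theorem 2.2 of the paper). -/
theorem elr_three_convex_tm2 {E : Type*} [Nonempty E] (L : Submodule ℝ (E → ℝ))
    (h1L : (fun _ : E => (1 : ℝ)) ∈ L)
    (A : L →ₗ[ℝ] ℝ)
    (hApos : ∀ g : L, (∀ t : E, 0 ≤ g.1 t) → 0 ≤ A g)
    (hAnorm : A ⟨fun _ => 1, h1L⟩ = 1)
    (m M : ℝ) (hmM : m < M)
    (f : E → ℝ) (hfL : f ∈ L) (hfm : ∀ t, m ≤ f t) (hfM : ∀ t, f t ≤ M)
    (φ : ℝ → ℝ) (a b : ℝ) (ham : a < m) (hMb : M < b)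
    (hφ : ContDiffOn ℝ 3 φ (Set.Ioo a b))
    (hφ3 : ∀ x ∈ Set.Ioo a b, 0 ≤ iteratedDeriv 3 φ x)
    (hφfL : (fun t => φ (f t)) ∈ L)
    (hg1L : (fun t => (f t - m) * deriv φ (f t)) ∈ L)
    (hg2L : (fun t => (M - f t) * deriv φ (f t)) ∈ L) :
    let Δ := (φ M - φ m) / (M - m)
    (A ⟨f, hfL⟩ - m) * (Δ - deriv φ m / 2)
          - (1 / 2) * A ⟨fun t => (f t - m) * deriv φ (f t), hg1L⟩
        ≤ (M - A ⟨f, hfL⟩) / (M - m) * φ m + (A ⟨f, hfL⟩ - m) / (M - m) * φ M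
            - A ⟨fun t => φ (f t), hφfL⟩
      ∧ (M - A ⟨f, hfL⟩) / (M - m) * φ m + (A ⟨f, hfL⟩ - m) / (M - m) * φ M
            - A ⟨fun t => φ (f t), hφfL⟩
        ≤ (1 / 2) * A ⟨fun t => (M - f t) * deriv φ (f t), hg2L⟩
            - (M - A ⟨f, hfL⟩) * (Δ - deriv φ M / 2) :=
  elr_three_convex_tm2_general L h1L A hApos hAnorm m M hmM f hfL hfm hfM φ a b ham hMb hφ hφ3 hφfL
    hg1L hg2L
end

section
/- Assume additionally 0 ≤ m. The harmonic generating function f(t) = 2t/(1 + t) satisfies f'''(t) = 12/(1 + t)⁴ > 0 on [0,∞), i.e. it is 3-convex, and hence, writing Δ = (2M/(1+M) − 2m/(1+m))/(M − m): (M − 1)·[2/(1+M)² − Δ] + (2/(1+M)³)·∑_{i=1}^n (M·q_i − p_i)²/q_i ≤ (M − 1)/(M − m)·(2m/(1+m)) + (1 − m)/(M − m)·(2M/(1+M)) − ∑_{i=1}^n 2p_i·q_i/(p_i + q_i) ≤ (1 − m)·[Δ − 2/(1+m)²] + (2/(1+m)³)·∑_{i=1}^n (p_i − m·q_i)²/q_i.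 -/
/-!
For `f t = 2t/(1+t)` the chord gap `((M-t) f m + (t-m) f M)/(M-m) - f t` exceeds its
second-order Taylor-type lower bound at `M` by `2(M-t)³/((1+M)³(1+t))` and falls short of the
one at `m` by `2(t-m)³/((1+m)³(1+t))`; both remainders are nonnegative for `t ∈ [m, M]`.
Evaluating at `t = pᵢ/qᵢ`, weighting by `qᵢ` and summing — that is, applying the monotone linear
functional `f ↦ D̃_f(p, q)` — yields the two bounds.
-/

open Finset Filter Topology

theorem iteratedDeriv_two_mul_div_one_add {k : ℕ} (hk : 0 < k) {t : ℝ} (ht : 1 + t ≠ 0) :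
    iteratedDeriv k (fun s : ℝ => 2 * s / (1 + s)) t
      = 2 * (-1) ^ (k + 1) * k.factorial / (1 + t) ^ (k + 1) := by
  have hf : (fun s : ℝ => 2 * s / (1 + s)) =ᶠ[𝓝 t] fun s => 2 + (-2) * (1 + s) ^ (-1 : ℤ) := by
    filter_upwards [(continuous_const.add continuous_id).continuousAt.eventually_ne ht] with s hs
    simp only [Pi.add_apply, id] at hs
    rw [zpow_neg_one]
    field_simp
    ring
  have hprod : ∀ j : ℕ, ∏ i ∈ range j, ((-1 : ℤ) - i : ℝ) = (-1) ^ j * j.factorial := by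
    intro j
    induction j with
    | zero => simp
    | succ j ih => rw [prod_range_succ, ih, Nat.factorial_succ]; push_cast; ring
  rw [hf.iteratedDeriv_eq, iteratedDeriv_const_add hk, iteratedDeriv_const_mul_field,
    iteratedDeriv_comp_const_add k (fun z : ℝ => z ^ (-1 : ℤ)), iteratedDeriv_eq_iterate]
  beta_reduce
  rw [iter_deriv_zpow, hprod, show (-1 : ℤ) - k = -((k + 1 : ℕ) : ℤ) by push_cast; ring, zpow_neg,
    zpow_natCast]
  ring

section FDivergence

variable {ι : Type*} [Fintype ι]

noncomputable def fDivergence (f : ℝ → ℝ) (p q : ι → ℝ) : ℝ :=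
  ∑ i, q i * f (p i / q i)

variable {p q : ι → ℝ}

theorem fDivergence_mono {f g : ℝ → ℝ} {s : Set ℝ} (hq : ∀ i, 0 ≤ q i)
    (hpq : ∀ i, p i / q i ∈ s) (hfg : ∀ t ∈ s, f t ≤ g t) :
    fDivergence f p q ≤ fDivergence g p q :=
  sum_le_sum fun i _ => mul_le_mul_of_nonneg_left (hfg _ (hpq i)) (hq i)

theorem fDivergence_add (f g : ℝ → ℝ) :
    fDivergence (fun t => f t + g t) p q = fDivergence f p q + fDivergence g p q := by
  simp only [fDivergence, mul_add, sum_add_distrib]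

theorem fDivergence_sub (f g : ℝ → ℝ) :
    fDivergence (fun t => f t - g t) p q = fDivergence f p q - fDivergence g p q := by
  simp only [fDivergence, mul_sub, sum_sub_distrib]

theorem fDivergence_mul_const (f : ℝ → ℝ) (c : ℝ) :
    fDivergence (fun t => f t * c) p q = fDivergence f p q * c := by
  simp only [fDivergence, sum_mul, mul_assoc]

theorem fDivergence_const_mul (c : ℝ) (f : ℝ → ℝ) :
    fDivergence (fun t => c * f t) p q = c * fDivergence f p q := by
  simp only [fDivergence, mul_sum, mul_left_comm]

theorem fDivergence_div_const (f : ℝ → ℝ) (c : ℝ) :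
    fDivergence (fun t => f t / c) p q = fDivergence f p q / c := by
  simp only [fDivergence, sum_div, mul_div_assoc]

theorem fDivergence_const (hq : ∑ i, q i = 1) (c : ℝ) : fDivergence (fun _ => c) p q = c := by
  simp only [fDivergence, ← sum_mul, hq, one_mul]

theorem fDivergence_id (hq : ∀ i, q i ≠ 0) (hp : ∑ i, p i = 1) :
    fDivergence (fun t => t) p q = 1 := by
  simp only [fDivergence, mul_div_cancel₀ _ (hq _), hp]

-- Needed separately: `fun t => c - t` is eta-reduced to `HSub.hSub c`, which `fDivergence_sub`
-- does not match.
theorem fDivergence_const_sub (hq : ∀ i, q i ≠ 0) (hps : ∑ i, p i = 1) (hqs : ∑ i, q i = 1)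
    (c : ℝ) : fDivergence (fun t => c - t) p q = c - 1 := by
  rw [fDivergence_sub (fun _ => c) (fun t => t), fDivergence_const hqs, fDivergence_id hq hps]

theorem fDivergence_const_sub_sq (hq : ∀ i, q i ≠ 0) (c : ℝ) :
    fDivergence (fun t => (c - t) ^ 2) p q = ∑ i, (c * q i - p i) ^ 2 / q i := by
  refine sum_congr rfl fun i _ => ?_
  field_simp [hq i]

theorem fDivergence_sub_const_sq (hq : ∀ i, q i ≠ 0) (c : ℝ) :
    fDivergence (fun t => (t - c) ^ 2) p q = ∑ i, (p i - c * q i) ^ 2 / q i := by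
  refine sum_congr rfl fun i _ => ?_
  field_simp [hq i]

theorem fDivergence_two_mul_div_one_add (hq : ∀ i, q i ≠ 0) :
    fDivergence (fun t => 2 * t / (1 + t)) p q = ∑ i, 2 * p i * q i / (p i + q i) := by
  refine sum_congr rfl fun i _ => ?_
  dsimp only
  rw [one_add_div (hq i), ← mul_div_assoc 2, div_div_div_cancel_right₀ (hq i), add_comm (q i)]
  ring

noncomputable def chordGap (f : ℝ → ℝ) (m M t : ℝ) : ℝ :=
  ((M - t) * f m + (t - m) * f M) / (M - m) - f t

theorem fDivergence_chordGap (hq : ∀ i, q i ≠ 0) (hps : ∑ i, p i = 1) (hqs : ∑ i, q i = 1)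
    (f : ℝ → ℝ) (m M : ℝ) :
    fDivergence (chordGap f m M) p q
      = (M - 1) / (M - m) * f m + (1 - m) / (M - m) * f M - fDivergence f p q := by
  change fDivergence (fun t => ((M - t) * f m + (t - m) * f M) / (M - m) - f t) p q = _
  simp only [fDivergence_sub, fDivergence_div_const, fDivergence_add,
    fDivergence_mul_const, fDivergence_const hqs, fDivergence_id hq hps,
    fDivergence_const_sub hq hps hqs]
  ring

end FDivergence

section ChordGap

variable {m M t : ℝ}

theorem le_chordGap_two_mul_div_one_add (hm : -1 < m) (hmM : m < M) (ht : t ∈ Set.Icc m M) :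
    (M - t) * (2 / (1 + M) ^ 2 - (2 * M / (1 + M) - 2 * m / (1 + m)) / (M - m))
        + 2 / (1 + M) ^ 3 * (M - t) ^ 2
      ≤ chordGap (fun s => 2 * s / (1 + s)) m M t := by
  obtain ⟨hmt, htM⟩ := ht
  have h1m : 0 < 1 + m := by linarith
  have h1t : 0 < 1 + t := by linarith
  have h1M : 0 < 1 + M := by linarith
  have hMm : 0 < M - m := by linarith
  have remainder : chordGap (fun s => 2 * s / (1 + s)) m M t
      - ((M - t) * (2 / (1 + M) ^ 2 - (2 * M / (1 + M) - 2 * m / (1 + m)) / (M - m))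
        + 2 / (1 + M) ^ 3 * (M - t) ^ 2)
      = 2 * (M - t) ^ 3 / ((1 + M) ^ 3 * (1 + t)) := by
    unfold chordGap
    field_simp
    ring
  have : 0 ≤ 2 * (M - t) ^ 3 / ((1 + M) ^ 3 * (1 + t)) := by
    have : 0 ≤ M - t := by linarith
    positivity
  linarith

theorem chordGap_two_mul_div_one_add_le (hm : -1 < m) (hmM : m < M) (hmt : m ≤ t) :
    chordGap (fun s => 2 * s / (1 + s)) m M t
      ≤ (t - m) * ((2 * M / (1 + M) - 2 * m / (1 + m)) / (M - m) - 2 / (1 + m) ^ 2)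
        + 2 / (1 + m) ^ 3 * (t - m) ^ 2 := by
  have h1m : 0 < 1 + m := by linarith
  have h1t : 0 < 1 + t := by linarith
  have h1M : 0 < 1 + M := by linarith
  have hMm : 0 < M - m := by linarith
  have remainder : (t - m) * ((2 * M / (1 + M) - 2 * m / (1 + m)) / (M - m) - 2 / (1 + m) ^ 2)
        + 2 / (1 + m) ^ 3 * (t - m) ^ 2 - chordGap (fun s => 2 * s / (1 + s)) m M t
      = 2 * (t - m) ^ 3 / ((1 + m) ^ 3 * (1 + t)) := by
    unfold chordGap
    field_simp
    ring
  have : 0 ≤ 2 * (t - m) ^ 3 / ((1 + m) ^ 3 * (1 + t)) := by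
    have : 0 ≤ t - m := by linarith
    positivity
  linarith

end ChordGap

theorem elr_harmonic_general (n : ℕ) (p q : Fin n → ℝ)
    (m M : ℝ) (hmM : m < M) (hm0 : 0 ≤ m)
    (hq : ∀ i, 0 < q i)
    (hps : ∑ i, p i = 1) (hqs : ∑ i, q i = 1)
    (hratio : ∀ i, p i / q i ∈ Set.Icc m M) :
    (∀ t : ℝ, 0 ≤ t →
        iteratedDeriv 3 (fun s : ℝ => 2 * s / (1 + s)) t = 12 / (1 + t) ^ 4
          ∧ 0 < iteratedDeriv 3 (fun s : ℝ => 2 * s / (1 + s)) t)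
      ∧ (let Δ := (2 * M / (1 + M) - 2 * m / (1 + m)) / (M - m)
        (M - 1) * (2 / (1 + M) ^ 2 - Δ)
              + 2 / (1 + M) ^ 3 * ∑ i, (M * q i - p i) ^ 2 / q i
            ≤ (M - 1) / (M - m) * (2 * m / (1 + m)) + (1 - m) / (M - m) * (2 * M / (1 + M))
                - ∑ i, 2 * p i * q i / (p i + q i)
          ∧ (M - 1) / (M - m) * (2 * m / (1 + m)) + (1 - m) / (M - m) * (2 * M / (1 + M))
                - ∑ i, 2 * p i * q i / (p i + q i)
            ≤ (1 - m) * (Δ - 2 / (1 + m) ^ 2)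
                + 2 / (1 + m) ^ 3 * ∑ i, (p i - m * q i) ^ 2 / q i) := by
  have hq0 i : q i ≠ 0 := (hq i).ne'
  have hm : -1 < m := by linarith
  have lower := fDivergence_mono (fun i => (hq i).le) hratio
    fun t ht => le_chordGap_two_mul_div_one_add hm hmM ht
  have upper := fDivergence_mono (fun i => (hq i).le) hratio
    fun t ht => chordGap_two_mul_div_one_add_le hm hmM ht.1
  simp only [fDivergence_chordGap hq0 hps hqs, fDivergence_two_mul_div_one_add hq0,
    fDivergence_add, fDivergence_sub, fDivergence_mul_const, fDivergence_const_mul,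
    fDivergence_const hqs, fDivergence_id hq0 hps, fDivergence_const_sub hq0 hps hqs,
    fDivergence_const_sub_sq hq0, fDivergence_sub_const_sq hq0] at lower upper
  refine ⟨fun t ht => ?_, lower, upper⟩
  rw [iteratedDeriv_two_mul_div_one_add (by norm_num) (by positivity)]
  norm_num [Nat.factorial]
  positivity

/-- Harmonic divergence: the generating function `t ↦ 2t/(1+t)` satisfies
`f'''(t) = 12/(1+t)⁴ > 0` on `[0,∞)`, hence is 3-convex there, and the
Edmundson–Lah–Ribarič chain holds (Example 3.1 of the paper). -/
theorem elr_harmonic (n : ℕ) (p q : Fin n → ℝ)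
    (m M : ℝ) (hmM : m < M) (hm0 : 0 ≤ m) (hm1 : m ≤ 1) (h1M : 1 ≤ M)
    (hp : ∀ i, 0 ≤ p i) (hq : ∀ i, 0 < q i)
    (hps : ∑ i, p i = 1) (hqs : ∑ i, q i = 1)
    (hratio : ∀ i, p i / q i ∈ Set.Icc m M) :
    (∀ t : ℝ, 0 ≤ t →
        iteratedDeriv 3 (fun s : ℝ => 2 * s / (1 + s)) t = 12 / (1 + t) ^ 4
          ∧ 0 < iteratedDeriv 3 (fun s : ℝ => 2 * s / (1 + s)) t)
      ∧ (let Δ := (2 * M / (1 + M) - 2 * m / (1 + m)) / (M - m)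
        (M - 1) * (2 / (1 + M) ^ 2 - Δ)
              + 2 / (1 + M) ^ 3 * ∑ i, (M * q i - p i) ^ 2 / q i
            ≤ (M - 1) / (M - m) * (2 * m / (1 + m)) + (1 - m) / (M - m) * (2 * M / (1 + M))
                - ∑ i, 2 * p i * q i / (p i + q i)
          ∧ (M - 1) / (M - m) * (2 * m / (1 + m)) + (1 - m) / (M - m) * (2 * M / (1 + M))
                - ∑ i, 2 * p i * q i / (p i + q i)
            ≤ (1 - m) * (Δ - 2 / (1 + m) ^ 2)
                + 2 / (1 + m) ^ 3 * ∑ i, (p i - m * q i) ^ 2 / q i) :=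
  elr_harmonic_general n p q m M hmM hm0 hq hps hqs hratio
end
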